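/- arXiv:1102.3503 — 2 statements merged into one kernel-verified Lean document; each statement's English description precedes it below -/
import Mathlib

section
/- For any m, k ≥ 1 and any regular language L ⊆ V*, the language HI_{m,k}(L) (non-iterated m-bounded k-hairpin incompletion applied to L) is regular. -/
/-!
A word of `L` is either kept, when it admits no hairpin decomposition, or extended by `γ̄^R`
for one of finitely many shapes `(γ, α)` with `|γ| ≤ m`, `|α| = k`. So `HI_{m,k}(L)` is a finite
union of the languages `(L ∩ V*γαV*ᾱ^R)·{γ̄^R}` and `{γ̄^R}·(L ∩ αV*ᾱ^RγV*)`, together with the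
words of `L` that match none of these patterns. All of them are regular because regular languages
are closed under concatenation: by Myhill–Nerode, a left quotient of `l * m` is determined by a
left quotient of `l` and a set of left quotients of `m`.
-/

open scoped Classical

namespace Hairpin

variable {V : Type}

/-- Reversed complement of a word under the involution `bar`. -/
def rc (bar : V → V) (w : List V) : List V := (w.map bar).reverse

/-- `w` admits a right hairpin decomposition `w = δγαβᾱ^R` with `|α| = k`, `|γ| ≤ m`. -/
def hasRightDecomp (bar : V → V) (m k : ℕ) (w : List V) : Prop :=
  ∃ δ γ α β : List V, w = δ ++ γ ++ α ++ β ++ rc bar α ∧ α.length = k ∧ γ.length ≤ m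

def hasLeftDecomp (bar : V → V) (m k : ℕ) (w : List V) : Prop :=
  ∃ α β γ δ : List V, w = α ++ β ++ rc bar α ++ γ ++ δ ∧ α.length = k ∧ γ.length ≤ m

/-- m-bounded right k-hairpin incompletion. -/
noncomputable def rHI (bar : V → V) (m k : ℕ) (w : List V) : Set (List V) :=
  if hasRightDecomp bar m k w then
    { v | ∃ δ γ α β : List V, w = δ ++ γ ++ α ++ β ++ rc bar α ∧ α.length = k ∧
          γ.length ≤ m ∧ v = w ++ rc bar γ }
  else {w}

/-- m-bounded left k-hairpin incompletion. -/
noncomputable def lHI (bar : V → V) (m k : ℕ) (w : List V) : Set (List V) :=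
  if hasLeftDecomp bar m k w then
    { v | ∃ α β γ δ : List V, w = α ++ β ++ rc bar α ++ γ ++ δ ∧ α.length = k ∧
          γ.length ≤ m ∧ v = rc bar γ ++ w }
  else {w}

/-- m-bounded k-hairpin incompletion. -/
noncomputable def HI (bar : V → V) (m k : ℕ) (w : List V) : Set (List V) :=
  rHI bar m k w ∪ lHI bar m k w

noncomputable def rHIn (bar : V → V) (m k : ℕ) (w : List V) : ℕ → Set (List V)
  | 0 => {w}
  | n + 1 => ⋃ v ∈ rHIn bar m k w n, rHI bar m k v

noncomputable def rHIstar (bar : V → V) (m k : ℕ) (w : List V) : Set (List V) :=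
  ⋃ n, rHIn bar m k w n

noncomputable def HIn (bar : V → V) (m k : ℕ) (w : List V) : ℕ → Set (List V)
  | 0 => {w}
  | n + 1 => ⋃ v ∈ HIn bar m k w n, HI bar m k v

noncomputable def HIstar (bar : V → V) (m k : ℕ) (w : List V) : Set (List V) :=
  ⋃ n, HIn bar m k w n

noncomputable def rHIstarL (bar : V → V) (m k : ℕ) (L : Set (List V)) : Set (List V) :=
  ⋃ w ∈ L, rHIstar bar m k w

noncomputable def HIL (bar : V → V) (m k : ℕ) (L : Set (List V)) : Set (List V) :=
  ⋃ w ∈ L, HI bar m k w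

noncomputable def HIstarL (bar : V → V) (m k : ℕ) (L : Set (List V)) : Set (List V) :=
  ⋃ w ∈ L, HIstar bar m k w

/-- The set `C_{m,k}(w)`. -/
def Cmk (bar : V → V) (m k : ℕ) (w : List V) : Set (List V × List V) :=
  { p | ∃ x y w₁ w₂ z : List V,
      x.length ≤ m ∧ y.length = k ∧ w = w₁ ++ (x ++ y) ++ w₂ ∧
      z.length ≤ k ∧ z <:+ w₂ ∧ z <+: rc bar y ∧ p = (x ++ y, z) }

/-- The suffix component of `D_{m,k}(w)`: all suffixes of `w` of length `i+k-1`, `0 ≤ i ≤ m`. -/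
def DmkSuf (m k : ℕ) (w : List V) : Set (List V) :=
  { s | ∃ i ≤ m, s.length = i + k - 1 ∧ s <:+ w }

noncomputable def Dmk (bar : V → V) (m k : ℕ) (w : List V) :
    Set (List V × List V) × Set (List V) :=
  (Cmk bar m k w, DmkSuf m k w)

/-- The set `C'_{m,k}(w)`. -/
def Cmk' (bar : V → V) (m k : ℕ) (w : List V) : Set (List V × List V) :=
  { p | ∃ x y w₁ w₂ z : List V,
      x.length ≤ m ∧ y.length = k ∧ w = w₁ ++ (y ++ x) ++ w₂ ∧
      z.length ≤ k ∧ z <+: w₁ ∧ z <:+ rc bar y ∧ p = (z, y ++ x) }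

/-- The prefix component of `D'_{m,k}(w)`. -/
def DmkPref (m k : ℕ) (w : List V) : Set (List V) :=
  { s | ∃ i ≤ m, s.length = i + k - 1 ∧ s <+: w }

noncomputable def Dmk' (bar : V → V) (m k : ℕ) (w : List V) :
    Set (List V × List V) × Set (List V) :=
  (Cmk' bar m k w, DmkPref m k w)

noncomputable def Emk (bar : V → V) (m k : ℕ) (w : List V) :=
  (Dmk bar m k w, Dmk' bar m k w)


/-- View a set of words as a `Language`. -/
def lang {V : Type} (L : Set (List V)) : Language V := L

end Hairpin

theorem Set.biUnion_ite_eq {α ι : Type*} (L : Set α) (S : Set ι) (P : ι → Set α)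
    (F : ι → α → α) :
    ⋃ w ∈ L, (if ∃ i ∈ S, w ∈ P i then {v | ∃ i ∈ S, w ∈ P i ∧ v = F i w} else {w}) =
      (⋃ i ∈ S, F i '' (L ∩ P i)) ∪ (L \ ⋃ i ∈ S, P i) := by
  ext v
  simp only [Set.mem_iUnion, Set.mem_union, Set.mem_sdiff, Set.mem_image, Set.mem_inter_iff,
    exists_prop, not_exists, not_and]
  constructor
  · rintro ⟨w, hw, hv⟩
    split_ifs at hv with h
    · obtain ⟨i, hi, hwi, rfl⟩ := hv
      exact Or.inl ⟨i, hi, w, ⟨hw, hwi⟩, rfl⟩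
    · obtain rfl := hv
      exact Or.inr ⟨hw, fun i hi hvi => h ⟨i, hi, hvi⟩⟩
  · rintro (⟨i, hi, w, ⟨hw, hwi⟩, rfl⟩ | ⟨hv, hvP⟩)
    · exact ⟨w, hw, by rw [if_pos ⟨i, hi, hwi⟩]; exact ⟨i, hi, hwi, rfl⟩⟩
    · refine ⟨v, hv, ?_⟩
      rw [if_neg fun ⟨i, hi, hvi⟩ => hvP i hi hvi]
      rfl

namespace Language

variable {α : Type*} {l m : Language α}

@[simp]
theorem mem_top (x : List α) : x ∈ (⊤ : Language α) := trivial

@[simp]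
theorem mem_singleton {x y : List α} : x ∈ ({y} : Language α) ↔ x = y := Iff.rfl

theorem isRegular_bot : (⊥ : Language α).IsRegular :=
  .of_finite_range_leftQuotient <| (Set.finite_singleton ⊥).subset <|
    Set.range_subset_iff.2 fun _ => rfl

theorem isRegular_top : (⊤ : Language α).IsRegular :=
  compl_bot (α := Language α) ▸ isRegular_bot.compl

theorem isRegular_singleton (u : List α) : ({u} : Language α).IsRegular := by
  refine .of_finite_range_leftQuotient <|
    ((u.tails.finite_toSet.image fun z => ({z} : Language α)).insert ⊥).subset ?_
  rintro _ ⟨x, rfl⟩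
  by_cases hx : x <+: u
  · obtain ⟨z, rfl⟩ := hx
    refine Or.inr ⟨z, (List.mem_tails _ _).2 (List.suffix_append x z), ?_⟩
    ext y
    exact (List.append_right_inj x).symm
  · exact Or.inl <| Set.eq_empty_of_forall_notMem fun y hy => hx ⟨y, hy⟩

theorem leftQuotient_mul (l m : Language α) (x : List α) :
    (l * m).leftQuotient x =
      l.leftQuotient x * m + ⨆ p : {p : List α × List α // p.1 ++ p.2 = x ∧ p.1 ∈ l},
        m.leftQuotient p.1.2 := by
  ext y
  simp only [mem_leftQuotient, mem_add, mem_mul, mem_iSup]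
  constructor
  · rintro ⟨a, ha, b, hb, hab⟩
    rcases List.append_eq_append_iff.1 hab with ⟨a', rfl, rfl⟩ | ⟨c, rfl, rfl⟩
    · exact Or.inr ⟨⟨(a, a'), rfl, ha⟩, hb⟩
    · exact Or.inl ⟨c, ha, b, hb, rfl⟩
  · rintro (⟨c, hc, b, hb, rfl⟩ | ⟨⟨⟨a, a'⟩, rfl, ha⟩, hy⟩)
    · exact ⟨_, hc, b, hb, List.append_assoc _ _ _⟩
    · exact ⟨a, ha, _, hy, (List.append_assoc _ _ _).symm⟩

theorem IsRegular.mul (hl : l.IsRegular) (hm : m.IsRegular) : (l * m).IsRegular := by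
  refine .of_finite_range_leftQuotient <|
    (hl.finite_range_leftQuotient.image2 (fun q T => q * m + sSup T)
      hm.finite_range_leftQuotient.powerset).subset ?_
  rintro _ ⟨x, rfl⟩
  refine ⟨_, ⟨x, rfl⟩, Set.range fun p : {p : List α × List α // p.1 ++ p.2 = x ∧ p.1 ∈ l} =>
    m.leftQuotient p.1.2, ?_, (leftQuotient_mul l m x).symm⟩
  exact Set.range_subset_iff.2 fun p => ⟨p.1.2, rfl⟩

theorem IsRegular.biSup {ι : Type*} {s : Set ι} (hs : s.Finite) {l : ι → Language α}
    (h : ∀ i ∈ s, (l i).IsRegular) : (⨆ i ∈ s, l i).IsRegular := by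
  induction s, hs using Set.Finite.induction_on with
  | empty => simpa using isRegular_bot
  | @insert a s _ _ ih =>
    rw [iSup_insert]
    exact (h a (Set.mem_insert a s)).add (ih fun i hi => h i (Set.mem_insert_of_mem a hi))

theorem IsRegular.image_append_right (hl : l.IsRegular) (u : List α) :
    IsRegular ((· ++ u) '' l : Language α) :=
  (congrArg IsRegular Set.image2_singleton_right).mp (hl.mul (isRegular_singleton u))

theorem IsRegular.image_append_left (hl : l.IsRegular) (u : List α) :
    IsRegular ((u ++ ·) '' l : Language α) :=
  (congrArg IsRegular Set.image2_singleton_left).mp ((isRegular_singleton u).mul hl)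

theorem IsRegular.biUnion_ite {ι : Type*} (hl : l.IsRegular) {S : Set ι} (hS : S.Finite)
    {P : ι → Language α} (hP : ∀ i ∈ S, (P i).IsRegular) {F : ι → List α → List α}
    (hF : ∀ i ∈ S, ∀ l : Language α, l.IsRegular → IsRegular (F i '' l : Language α)) :
    IsRegular (⋃ w ∈ l, if ∃ i ∈ S, w ∈ P i then {v | ∃ i ∈ S, w ∈ P i ∧ v = F i w} else {w} :
      Language α) :=
  (congrArg IsRegular (Set.biUnion_ite_eq l S P F)).mpr <|
    (IsRegular.biSup hS fun i hi => hF i hi _ (hl.inf (hP i hi))).add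
      (hl.inf (IsRegular.biSup hS hP).compl)

end Language

namespace Hairpin

open Language

section

variable {V : Type} (bar : V → V)

-- A hairpin shape is a pair `p = (γ, α)`.
def hairpinShapes (m k : ℕ) : Set (List V × List V) :=
  {p | p.1.length ≤ m ∧ p.2.length = k}

def rightPattern (p : List V × List V) : Language V :=
  ⊤ * {p.1 ++ p.2} * ⊤ * {rc bar p.2}

def leftPattern (p : List V × List V) : Language V :=
  {p.2} * ⊤ * {rc bar p.2 ++ p.1} * ⊤

theorem mem_rightPattern {p : List V × List V} {w : List V} :
    w ∈ rightPattern bar p ↔ ∃ δ β, w = δ ++ p.1 ++ p.2 ++ β ++ rc bar p.2 := by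
  simp [rightPattern, mem_mul, eq_comm]

theorem mem_leftPattern {p : List V × List V} {w : List V} :
    w ∈ leftPattern bar p ↔ ∃ β δ, w = p.2 ++ β ++ rc bar p.2 ++ p.1 ++ δ := by
  simp [leftPattern, mem_mul, eq_comm]

theorem isRegular_rightPattern (p : List V × List V) : (rightPattern bar p).IsRegular :=
  ((isRegular_top.mul (isRegular_singleton _)).mul isRegular_top).mul (isRegular_singleton _)

theorem isRegular_leftPattern (p : List V × List V) : (leftPattern bar p).IsRegular :=
  (((isRegular_singleton _).mul isRegular_top).mul (isRegular_singleton _)).mul isRegular_top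

theorem hairpinShapes_finite [Finite V] (m k : ℕ) : (hairpinShapes (V := V) m k).Finite :=
  ((List.finite_length_le V m).prod (List.finite_length_eq V k)).subset fun _ hp => hp

theorem rHI_eq_ite (m k : ℕ) (w : List V) :
    rHI bar m k w =
      if ∃ p ∈ hairpinShapes m k, w ∈ rightPattern bar p then
        {v | ∃ p ∈ hairpinShapes m k, w ∈ rightPattern bar p ∧ v = w ++ rc bar p.1}
      else {w} := by
  simp only [rHI, hasRightDecomp, hairpinShapes, mem_rightPattern, Prod.exists]
  congr 1
  · apply propext
    constructor
    · rintro ⟨δ, γ, α, β, hw, hα, hγ⟩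
      exact ⟨γ, α, ⟨hγ, hα⟩, δ, β, hw⟩
    · rintro ⟨γ, α, ⟨hγ, hα⟩, δ, β, hw⟩
      exact ⟨δ, γ, α, β, hw, hα, hγ⟩
  · ext v
    constructor
    · rintro ⟨δ, γ, α, β, hw, hα, hγ, rfl⟩
      exact ⟨γ, α, ⟨hγ, hα⟩, ⟨δ, β, hw⟩, rfl⟩
    · rintro ⟨γ, α, ⟨hγ, hα⟩, ⟨δ, β, hw⟩, rfl⟩
      exact ⟨δ, γ, α, β, hw, hα, hγ, rfl⟩

theorem lHI_eq_ite (m k : ℕ) (w : List V) :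
    lHI bar m k w =
      if ∃ p ∈ hairpinShapes m k, w ∈ leftPattern bar p then
        {v | ∃ p ∈ hairpinShapes m k, w ∈ leftPattern bar p ∧ v = rc bar p.1 ++ w}
      else {w} := by
  simp only [lHI, hasLeftDecomp, hairpinShapes, mem_leftPattern, Prod.exists]
  congr 1
  · apply propext
    constructor
    · rintro ⟨α, β, γ, δ, hw, hα, hγ⟩
      exact ⟨γ, α, ⟨hγ, hα⟩, β, δ, hw⟩
    · rintro ⟨γ, α, ⟨hγ, hα⟩, β, δ, hw⟩
      exact ⟨α, β, γ, δ, hw, hα, hγ⟩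
  · ext v
    constructor
    · rintro ⟨α, β, γ, δ, hw, hα, hγ, rfl⟩
      exact ⟨γ, α, ⟨hγ, hα⟩, ⟨β, δ, hw⟩, rfl⟩
    · rintro ⟨γ, α, ⟨hγ, hα⟩, ⟨β, δ, hw⟩, rfl⟩
      exact ⟨α, β, γ, δ, hw, hα, hγ, rfl⟩

theorem HIL_eq_union (m k : ℕ) (L : Set (List V)) :
    HIL bar m k L = (⋃ w ∈ L, rHI bar m k w) ∪ ⋃ w ∈ L, lHI bar m k w := by
  simp only [HIL, HI, Set.iUnion_union_distrib]

end

variable {V : Type} [Fintype V]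

theorem regular_closed_HIL_general (bar : V → V) (m k : ℕ)
    (L : Set (List V)) (hL : Language.IsRegular (lang L)) :
    Language.IsRegular (lang (HIL bar m k L)) := by
  have hS := hairpinShapes_finite (V := V) m k
  rw [HIL_eq_union]
  simp only [rHI_eq_ite, lHI_eq_ite]
  exact (hL.biUnion_ite hS (fun p _ => isRegular_rightPattern bar p)
      fun p _ l hl => hl.image_append_right _).add
    (hL.biUnion_ite hS (fun p _ => isRegular_leftPattern bar p)
      fun p _ l hl => hl.image_append_left _)

theorem regular_closed_HIL (bar : V → V) (hbar : ∀ a, bar (bar a) = a) (m k : ℕ) (hm : 1 ≤ m) (hk : 1 ≤ k)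
    (L : Set (List V)) (hL : Language.IsRegular (lang L)) :
    Language.IsRegular (lang (HIL bar m k L)) :=
  regular_closed_HIL_general bar m k L hL

end Hairpin
end

section
/- A language L ⊆ V* is regular if and only if there exist an alphabet V' containing a distinguished symbol #, a subset V'' ⊆ V', a word w ∈ (V')*, and a weak coding h : V' → V ∪ {λ} such that L = h( rHI*_{1,1}(w) ∩ (V' − {#})* V'' ). -/
open scoped Classical

namespace Hairpin

variable {V : Type}

/-!
With `|α| = 1` and `|γ| ≤ 1`, a hairpin incompletion step appends `c̄` to a word `δ c a β ā`.
Whether a letter may be appended therefore depends only on the profile of the word: its last two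
letters and the set of its factors of length two before the last letter. So the left quotients
of `rHI*_{1,1}(w)` are those by prefixes of `w`, the empty language, and one for each profile:
finitely many, and the closure is regular by Myhill–Nerode. A left quotient of `h(L)` under a weak
coding `h` is a union of images of left quotients of `L`, so weak codings preserve regularity too.

Conversely, for a DFA `M` take as nodes the pairs (state, last letter read), list each transition
`p ⟶ p'` as an unmarked block `# p' p`, and end with the marked start node; the involution toggles
the mark. As the appended letters are marked and the template is not, a step from a word ending in
`p̄` copies a successor `p'` of `p` (or `#`) out of the template. The closure thus consists of the
template followed by marked walks from the start node; those avoiding `#̄` and ending in an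
accepting state are the runs of `M` on its accepted words, which the weak coding reads off.
-/

section Closure

variable {α : Type} (bar : α → α)

def HairpinStep (W W' : List α) : Prop :=
  ∃ δ c a β, W = δ ++ [c, a] ++ β ++ [bar a] ∧ W' = W ++ [bar c]

theorem rHI_one_one_eq (W : List α) :
    rHI bar 1 1 W = insert W {W' | HairpinStep bar W W'} := by
  have step_decomp : ∀ {W' : List α}, HairpinStep bar W W' →
      ∃ δ γ α' β, W = δ ++ γ ++ α' ++ β ++ rc bar α' ∧ α'.length = 1 ∧ γ.length ≤ 1 ∧
        W' = W ++ rc bar γ := by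
    rintro W' ⟨δ, c, a, β, rfl, rfl⟩
    exact ⟨δ, [c], [a], β, by simp [rc], rfl, le_rfl, by simp [rc]⟩
  unfold rHI
  split_ifs with h
  · ext W'
    simp only [Set.mem_ofPred_eq, Set.mem_insert_iff]
    constructor
    · rintro ⟨δ, γ, α', β, hW, hα, hγ, rfl⟩
      obtain ⟨a, rfl⟩ := List.length_eq_one_iff.1 hα
      rcases Nat.le_one_iff_eq_zero_or_eq_one.1 hγ with hγ | hγ
      · simp [List.length_eq_zero_iff.1 hγ, rc]
      · obtain ⟨c, rfl⟩ := List.length_eq_one_iff.1 hγ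
        exact Or.inr ⟨δ, c, a, β, by simpa [rc] using hW, by simp [rc]⟩
    · rintro (rfl | hstep)
      · obtain ⟨δ, γ, α', β, hW, hα, -⟩ := h
        exact ⟨δ ++ γ, [], α', β, by simpa using hW, hα, by simp, by simp [rc]⟩
      · exact step_decomp hstep
  · have no_step : {W' | HairpinStep bar W W'} = ∅ :=
      Set.eq_empty_of_forall_notMem fun W' hstep =>
        h (let ⟨δ, γ, α', β, hW, hα, hγ, _⟩ := step_decomp hstep; ⟨δ, γ, α', β, hW, hα, hγ⟩)
    rw [no_step, insert_empty_eq]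

theorem rHIstar_one_one_eq (w : List α) :
    rHIstar bar 1 1 w = {W | Relation.ReflTransGen (HairpinStep bar) w W} := by
  ext W
  simp only [rHIstar, Set.mem_iUnion, Set.mem_ofPred_eq]
  constructor
  · rintro ⟨n, hn⟩
    induction n generalizing W with
    | zero => exact hn ▸ .refl
    | succ n ih =>
      simp only [rHIn, Set.mem_iUnion] at hn
      obtain ⟨v, hv, hW⟩ := hn
      rw [rHI_one_one_eq] at hW
      rcases hW with rfl | hstep
      · exact ih _ hv
      · exact (ih _ hv).tail hstep
  · intro h
    induction h with
    | refl => exact ⟨0, rfl⟩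
    | tail _ hstep ih =>
      obtain ⟨n, hn⟩ := ih
      refine ⟨n + 1, ?_⟩
      simp only [rHIn, Set.mem_iUnion]
      exact ⟨_, hn, by rw [rHI_one_one_eq]; exact Or.inr hstep⟩

end Closure

section Profile

variable {α : Type} (bar : α → α)

theorem infix_pair_append_singleton {u : List α} {c a x : α} :
    [c, a] <:+: u ++ [x] ↔ [c, a] <:+: u ∨ (u.getLast? = some c ∧ x = a) := by
  have last_pair : (∃ t, [c, a] = t ++ [x] ∧ t <:+ u) ↔ u.getLast? = some c ∧ x = a := by
    rw [← List.singleton_suffix_iff_getLast?_eq_some]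
    constructor
    · rintro ⟨t, ht, hs⟩
      obtain ⟨rfl, hx⟩ := List.append_inj' (show [c] ++ [a] = t ++ [x] from ht) rfl
      exact ⟨hs, by simpa using hx.symm⟩
    · rintro ⟨hs, rfl⟩
      exact ⟨[c], rfl, hs⟩
  rw [List.infix_concat_iff, List.suffix_concat_iff, last_pair]
  simp [or_comm]

abbrev Profile (α : Type) := Option α × Option α × Set (α × α)

def profile (u : List α) : Profile α :=
  (u.dropLast.getLast?, u.getLast?, {p | [p.1, p.2] <:+: u.dropLast})

def Profile.snoc (s : Profile α) (x : α) : Profile α :=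
  (s.2.1, some x, s.2.2 ∪ {p | s.1 = some p.1 ∧ s.2.1 = some p.2})

theorem profile_append_singleton (u : List α) (x : α) :
    profile (u ++ [x]) = (profile u).snoc x := by
  simp only [profile, Profile.snoc, List.dropLast_concat, List.getLast?_concat]
  refine Prod.ext rfl (Prod.ext rfl ?_)
  rcases u.eq_nil_or_concat' with rfl | ⟨u, y, rfl⟩ <;> ext p <;>
    simp [infix_pair_append_singleton]

def Profile.Admits (s : Profile α) (x : α) : Prop :=
  ∃ c a, x = bar c ∧ s.2.1 = some (bar a) ∧ (c, a) ∈ s.2.2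

theorem hairpinStep_iff {W W' : List α} :
    HairpinStep bar W W' ↔ ∃ x, W' = W ++ [x] ∧ (profile W).Admits bar x := by
  simp only [HairpinStep, Profile.Admits, profile]
  constructor
  · rintro ⟨δ, c, a, β, rfl, rfl⟩
    refine ⟨bar c, rfl, c, a, rfl, ?_, ?_⟩ <;>
      simp only [List.getLast?_concat, List.dropLast_concat]
    exact List.infix_append δ [c, a] β
  · rintro ⟨_, rfl, c, a, rfl, hlast, δ, β, hpair⟩
    obtain ⟨W, rfl⟩ := List.getLast?_eq_some_iff.1 hlast
    rw [List.dropLast_concat] at hpair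
    exact ⟨δ, c, a, β, by rw [hpair], rfl⟩

end Profile

section Regularity

open Relation

variable {α : Type} {bar : α → α} {w : List α}

theorem prefix_of_reflTransGen {W : List α}
    (h : ReflTransGen (HairpinStep bar) w W) : w <+: W := by
  induction h with
  | refl => exact List.prefix_rfl
  | tail _ hstep ih =>
    obtain ⟨_, rfl, -⟩ := (hairpinStep_iff bar).1 hstep
    exact ih.trans (List.prefix_append _ _)

theorem reflTransGen_of_prefix {W U : List α}
    (h : ReflTransGen (HairpinStep bar) w W) (hwU : w <+: U) (hUW : U <+: W) :
    ReflTransGen (HairpinStep bar) w U := by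
  induction h with
  | refl => rw [List.IsPrefix.eq_of_length hwU (hUW.length_le.antisymm hwU.length_le).symm]
  | tail hW hstep ih =>
    obtain ⟨x, rfl, -⟩ := (hairpinStep_iff bar).1 hstep
    rcases List.prefix_concat_iff.1 hUW with rfl | hU
    · exact .tail hW hstep
    · exact ih hU

theorem reflTransGen_append_singleton_iff {W : List α} {x : α}
    (hW : w.length ≤ W.length) :
    ReflTransGen (HairpinStep bar) w (W ++ [x]) ↔
      ReflTransGen (HairpinStep bar) w W ∧ (profile W).Admits bar x := by
  rw [ReflTransGen.cases_tail_iff]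
  constructor
  · rintro (h | ⟨U, hU, hstep⟩)
    · have := congrArg List.length h
      simp only [List.length_append, List.length_singleton] at this
      omega
    · obtain ⟨y, hUy, hy⟩ := (hairpinStep_iff bar).1 hstep
      obtain ⟨rfl, hxy⟩ := List.append_inj' hUy rfl
      obtain rfl : x = y := by simpa using hxy
      exact ⟨hU, hy⟩
  · rintro ⟨h, hx⟩
    exact Or.inr ⟨W, h, (hairpinStep_iff bar).2 ⟨x, rfl, hx⟩⟩

theorem leftQuotient_eq_of_profile_eq {u u' : List α}
    (hu : ReflTransGen (HairpinStep bar) w u) (hu' : ReflTransGen (HairpinStep bar) w u')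
    (hp : profile u = profile u') :
    Language.leftQuotient {W | ReflTransGen (HairpinStep bar) w W} u =
      Language.leftQuotient {W | ReflTransGen (HairpinStep bar) w W} u' := by
  have hlen {u₀ v : List α} (h₀ : ReflTransGen (HairpinStep bar) w u₀) :
      w.length ≤ (u₀ ++ v).length := by
    have := (prefix_of_reflTransGen h₀).length_le
    simp only [List.length_append]
    omega
  suffices ∀ v, profile (u ++ v) = profile (u' ++ v) ∧
      (ReflTransGen (HairpinStep bar) w (u ++ v) ↔ ReflTransGen (HairpinStep bar) w (u' ++ v)) from
    Set.ext fun v => (this v).2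
  intro v
  induction v using List.reverseRecOn with
  | nil => simpa using ⟨hp, iff_of_true hu hu'⟩
  | append_singleton v x ih =>
    simp only [← List.append_assoc, profile_append_singleton, ih.1, true_and,
      reflTransGen_append_singleton_iff (hlen hu),
      reflTransGen_append_singleton_iff (hlen hu'), ih.2]

theorem leftQuotient_eq_zero {u : List α}
    (hu : ¬ ReflTransGen (HairpinStep bar) w u) (huw : ¬ u <+: w) :
    Language.leftQuotient {W | ReflTransGen (HairpinStep bar) w W} u = 0 := by
  refine Language.zero_def ▸ Set.eq_empty_of_forall_notMem fun v huv => ?_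
  have hw : w <+: u ++ v := prefix_of_reflTransGen huv
  rcases List.prefix_or_prefix_of_prefix (List.prefix_append u v) hw with h | h
  · exact huw h
  · exact hu (reflTransGen_of_prefix huv h (List.prefix_append u v))

variable (bar w) in
theorem isRegular_rHIstar [Finite α] : (lang (rHIstar bar 1 1 w)).IsRegular := by
  rw [lang, rHIstar_one_one_eq]
  set L : Language α := {W | ReflTransGen (HairpinStep bar) w W}
  let Q : Profile α → Language α := fun s =>
    {v | ∃ u, ReflTransGen (HairpinStep bar) w u ∧ profile u = s ∧ u ++ v ∈ L}
  have hQ {u} (hu : ReflTransGen (HairpinStep bar) w u) : L.leftQuotient u = Q (profile u) := by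
    ext v
    constructor
    · exact fun hv => ⟨u, hu, rfl, hv⟩
    · rintro ⟨u', hu', hp, hv⟩
      rw [← leftQuotient_eq_of_profile_eq hu' hu hp]
      exact hv
  have hprefixes : {u : List α | u <+: w}.Finite := by
    simpa only [List.mem_inits] using w.inits.finite_toSet
  refine Language.IsRegular.of_finite_range_leftQuotient <|
    ((hprefixes.image L.leftQuotient).union ((Set.finite_range Q).insert 0)).subset ?_
  rintro _ ⟨u, rfl⟩
  by_cases hu : ReflTransGen (HairpinStep bar) w u
  · exact Or.inr (Or.inr ⟨_, (hQ hu).symm⟩)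
  by_cases huw : u <+: w
  · exact Or.inl ⟨u, huw, rfl⟩
  · exact Or.inr (Or.inl (leftQuotient_eq_zero hu huw))

end Regularity

section WeakCoding

variable {α β : Type}

theorem mem_leftQuotient_image_filterMap {h : α → Option β} {L : Language α} {x y : List β} :
    y ∈ (lang (List.filterMap h '' L)).leftQuotient x ↔
      ∃ u, u.filterMap h = x ∧ ∃ v ∈ L.leftQuotient u, v.filterMap h = y := by
  change (∃ l ∈ L, l.filterMap h = x ++ y) ↔ _
  simp only [List.filterMap_eq_append_iff]
  constructor
  · rintro ⟨_, hl, l₁, l₂, rfl, h₁, h₂⟩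
    exact ⟨l₁, h₁, l₂, hl, h₂⟩
  · rintro ⟨l₁, h₁, l₂, hl, h₂⟩
    exact ⟨l₁ ++ l₂, hl, l₁, l₂, rfl, h₁, h₂⟩

theorem isRegular_image_filterMap {L : Language α} (hL : L.IsRegular) (h : α → Option β) :
    (lang (List.filterMap h '' L)).IsRegular := by
  let F : Set (Language α) → Language β := fun S => {y | ∃ K ∈ S, ∃ v ∈ K, v.filterMap h = y}
  refine .of_finite_range_leftQuotient <|
    (hL.finite_range_leftQuotient.powerset.image F).subset ?_
  rintro _ ⟨x, rfl⟩
  refine ⟨L.leftQuotient '' {u | u.filterMap h = x}, Set.image_subset_range _ _, ?_⟩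
  ext y
  rw [mem_leftQuotient_image_filterMap]
  constructor
  · rintro ⟨_, ⟨u, hu, rfl⟩, hv⟩
    exact ⟨u, hu, hv⟩
  · rintro ⟨u, hu, hv⟩
    exact ⟨_, ⟨u, hu, rfl⟩, hv⟩

theorem isRegular_of_snoc {σ : Type} [Finite σ] (f : List α → σ) (g : σ → α → σ)
    (hf : ∀ u a, f (u ++ [a]) = g (f u) a) (S : Set σ) : (lang {u | f u ∈ S}).IsRegular := by
  have := Fintype.ofFinite σ
  let M : DFA α σ := ⟨g, f [], S⟩
  have heval (u : List α) : M.eval u = f u := by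
    induction u using List.reverseRecOn with
    | nil => rfl
    | append_singleton u a ih => rw [DFA.eval_append_singleton, ih, hf]
  exact ⟨σ, inferInstance, M, Set.ext fun u => iff_of_eq (congrArg (· ∈ S) (heval u))⟩

-- The language `(V' - {#})* V''` of the paper.
def endMarked (hash : α) (V'' : Set α) : Set (List α) :=
  {x | ∃ x' a, x = x' ++ [a] ∧ a ∈ V'' ∧ hash ∉ x'}

theorem isRegular_endMarked [Finite α] (hash : α) (V'' : Set α) :
    (lang (endMarked hash V'')).IsRegular := by
  convert isRegular_of_snoc (fun u => (u.getLast?, decide (hash ∈ u.dropLast)))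
    (fun s a => (some a, s.2 || decide (some hash = s.1)))
    (fun u a => ?_) {s | ∃ a ∈ V'', s = (some a, false)} using 2
  · ext x
    rcases x.eq_nil_or_concat' with rfl | ⟨x, a, rfl⟩ <;> simp [endMarked]
  · rcases u.eq_nil_or_concat' with rfl | ⟨u, b, rfl⟩
    · simp
    · simp [Bool.or_comm]

end WeakCoding

section MarkedWalks

variable {X : Type}

def toggle (p : X × Bool) : X × Bool := (p.1, !p.2)

theorem toggle_toggle (p : X × Bool) : toggle (toggle p) = p := by
  simp [toggle]

theorem infix_pair_of_infix_append_marked {pre : List (X × Bool)} {l : List X} {c : X × Bool}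
    {a : X} (h : [c, (a, false)] <:+: pre ++ l.map (·, true)) : [c, (a, false)] <:+: pre := by
  induction l using List.reverseRecOn with
  | nil => simpa using h
  | append_singleton l x ih =>
    rw [List.map_append, ← List.append_assoc, List.map_singleton,
      infix_pair_append_singleton] at h
    rcases h with h | ⟨-, h⟩
    · exact ih h
    · simp at h

theorem exists_of_infix_pair_map_unmarked {core : List X} {c : X × Bool} {a : X}
    (h : [c, (a, false)] <:+: core.map (·, false)) : ∃ y, c = (y, false) ∧ [y, a] <:+: core := by
  obtain ⟨l, hl, hmap⟩ := List.infix_map_iff.1 h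
  obtain ⟨y, a', rfl⟩ : ∃ y a', l = [y, a'] := by
    rcases l with _ | ⟨y, _ | ⟨a', _ | _⟩⟩ <;> simp at hmap ⊢
  simp only [List.map_cons, List.map_nil, List.cons.injEq, Prod.mk.injEq, and_true] at hmap
  obtain ⟨rfl, rfl⟩ := hmap
  exact ⟨y, rfl, hl⟩

theorem hairpinStep_toggle_iff {core init : List X} {z : X} {W' : List (X × Bool)} :
    HairpinStep toggle (core.map (·, false) ++ (init ++ [z]).map (·, true)) W' ↔
      ∃ y, [y, z] <:+: core ∧ W' = core.map (·, false) ++ (init ++ [z, y]).map (·, true) := by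
  constructor
  · rintro ⟨δ, c, a, β, hW, rfl⟩
    rw [List.map_append, ← List.append_assoc, List.map_singleton] at hW
    obtain ⟨hpre, hlast⟩ := List.append_inj' hW rfl
    obtain rfl : a = (z, false) := by
      simp only [List.cons.injEq, and_true] at hlast
      rw [← toggle_toggle a, ← hlast]
      rfl
    obtain ⟨y, rfl, hy⟩ := exists_of_infix_pair_map_unmarked <|
      infix_pair_of_infix_append_marked (hpre ▸ List.infix_append δ [c, (z, false)] β)
    exact ⟨y, hy, by simp [toggle]⟩
  · rintro ⟨y, hy, rfl⟩
    obtain ⟨s, t, hst⟩ := hy.map (·, false)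
    refine ⟨s, (y, false), (z, false), t ++ init.map (·, true), ?_, by simp [toggle]⟩
    rw [← hst]
    simp [toggle]

theorem rHIstar_toggle_eq_walks (core : List X) (x₀ : X) :
    rHIstar toggle 1 1 (core.map (·, false) ++ [(x₀, true)]) =
      {W | ∃ ts, (x₀ :: ts).IsChain (fun x y => [y, x] <:+: core) ∧
        W = core.map (·, false) ++ (x₀ :: ts).map (·, true)} := by
  rw [rHIstar_one_one_eq]
  ext W
  constructor
  · intro h
    induction h with
    | refl => exact ⟨[], .singleton x₀, by simp⟩
    | tail _ hstep ih =>
      obtain ⟨ts, hchain, rfl⟩ := ih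
      obtain ⟨init, z, hz⟩ := (x₀ :: ts).eq_nil_or_concat'.resolve_left (List.cons_ne_nil _ _)
      rw [hz] at hstep hchain
      obtain ⟨y, hy, rfl⟩ := hairpinStep_toggle_iff.1 hstep
      refine ⟨ts ++ [y], ?_, by rw [← List.cons_append, hz]; simp⟩
      rw [← List.cons_append, hz, List.isChain_append]
      exact ⟨hchain, .singleton y, by simpa using hy⟩
  · rintro ⟨ts, hchain, rfl⟩
    induction ts using List.reverseRecOn with
    | nil => exact .refl
    | append_singleton ts y ih =>
      rw [← List.cons_append, List.isChain_append] at hchain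
      obtain ⟨hchain, -, hy⟩ := hchain
      obtain ⟨init, z, hz⟩ := (x₀ :: ts).eq_nil_or_concat'.resolve_left (List.cons_ne_nil _ _)
      refine .tail (ih hchain) ?_
      rw [hz] at hy
      rw [← List.cons_append, hz]
      exact hairpinStep_toggle_iff.2 ⟨y, by simpa using hy, by simp⟩

end MarkedWalks

section OptionNodes

variable {Y : Type}

theorem infix_some_pair_flatMap_iff {es : List (Y × Y)} {y x : Y} :
    [some y, some x] <:+: es.flatMap (fun e => [none, some e.1, some e.2]) ↔ (y, x) ∈ es := by
  induction es with
  | nil => simp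
  | cons e es ih =>
    have hrest : ¬ [some x] <+: es.flatMap (fun e => [none, some e.1, some e.2]) := by
      rcases es with _ | ⟨e', es⟩ <;> simp
    simp only [List.flatMap_cons, List.cons_append, List.nil_append, List.infix_cons_iff,
      List.cons_prefix_cons, reduceCtorEq, false_and, false_or, ih, hrest, and_false,
      List.nil_prefix, and_true, Option.some.injEq, List.mem_cons, Prod.ext_iff]

theorem exists_eq_map_some_of_none_notMem :
    ∀ {l : List (Option Y)}, none ∉ l → ∃ ps : List Y, l = ps.map some
  | [], _ => ⟨[], rfl⟩
  | none :: _, h => absurd List.mem_cons_self h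
  | some y :: l, h =>
    have ⟨ps, hps⟩ := exists_eq_map_some_of_none_notMem (l := l) (h ∘ List.mem_cons_of_mem _)
    ⟨y :: ps, by simp [hps]⟩

theorem mem_endMarked_iff {core l : List (Option Y)} {z : Option Y}
    {V'' : Set (Option Y × Bool)} :
    core.map (·, false) ++ (l ++ [z]).map (·, true) ∈ endMarked (none, true) V'' ↔
      none ∉ l ∧ (z, true) ∈ V'' := by
  simp only [endMarked, Set.mem_ofPred_eq, List.map_append, List.map_singleton, ← List.append_assoc]
  constructor
  · rintro ⟨x', a, hx, ha, hnone⟩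
    obtain ⟨rfl, h⟩ := List.append_inj' hx rfl
    simp only [List.cons.injEq, and_true] at h
    subst h
    exact ⟨fun hl => hnone (by simp [hl]), ha⟩
  · rintro ⟨hl, hz⟩
    exact ⟨_, _, rfl, hz, by simpa using hl⟩

end OptionNodes

section RunEncoding

variable {σ V : Type} (M : DFA V σ)

def RunStep (p p' : σ × Option V) : Prop := ∃ a, p' = (M.step p.1 a, some a)

def trace : σ → List V → List (σ × Option V)
  | _, [] => []
  | q, a :: u => (M.step q a, some a) :: trace (M.step q a) u

theorem isChain_runStep_iff {q : σ} {o : Option V} {ps : List (σ × Option V)} :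
    ((q, o) :: ps).IsChain (RunStep M) ↔ ∃ u, ps = trace M q u := by
  induction ps generalizing q o with
  | nil => exact iff_of_true (.singleton _) ⟨[], rfl⟩
  | cons p ps ih =>
    obtain ⟨q', o'⟩ := p
    rw [List.isChain_cons_cons, ih]
    constructor
    · rintro ⟨⟨a, hp⟩, u, rfl⟩
      simp only [Prod.mk.injEq] at hp
      obtain ⟨rfl, rfl⟩ := hp
      exact ⟨a :: u, rfl⟩
    · rintro ⟨_ | ⟨a, u⟩, h⟩
      · simp [trace] at h
      · simp only [trace, List.cons.injEq, Prod.mk.injEq] at h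
        obtain ⟨⟨rfl, rfl⟩, rfl⟩ := h
        exact ⟨⟨a, rfl⟩, u, rfl⟩

theorem filterMap_snd_trace (q : σ) (u : List V) : (trace M q u).filterMap Prod.snd = u := by
  induction u generalizing q with
  | nil => rfl
  | cons a u ih => simp [trace, ih]

theorem getLast?_cons_trace (q : σ) (o : Option V) (u : List V) :
    (((q, o) :: trace M q u).getLast?).map Prod.fst = some (M.evalFrom q u) := by
  induction u generalizing q o with
  | nil => rfl
  | cons a u ih => rw [trace, List.getLast?_cons_cons, ih, DFA.evalFrom_cons]

theorem fst_eq_evalFrom_of_cons_trace_eq {q : σ} {o : Option V} {u : List V}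
    {init : List (σ × Option V)} {p : σ × Option V} (h : (q, o) :: trace M q u = init ++ [p]) :
    p.1 = M.evalFrom q u := by
  have := getLast?_cons_trace M q o u
  rw [h, List.getLast?_concat] at this
  exact Option.some.inj this

variable [Fintype σ] [Fintype V]

noncomputable def edges : List ((σ × Option V) × (σ × Option V)) :=
  (Finset.univ : Finset ((σ × Option V) × V)).toList.map
    fun e => ((M.step e.1.1 e.2, some e.2), e.1)

theorem mem_edges {p p' : σ × Option V} : (p', p) ∈ edges M ↔ RunStep M p p' := by
  simp [edges, RunStep, eq_comm]

-- `none` plays the role of `#`.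
noncomputable def runCore : List (Option (σ × Option V)) :=
  (edges M).flatMap fun e => [none, some e.1, some e.2]

noncomputable def seedWord : List (Option (σ × Option V) × Bool) :=
  (runCore M).map (·, false) ++ [(some (M.start, none), true)]

noncomputable def runWord (u : List V) : List (Option (σ × Option V) × Bool) :=
  (runCore M).map (·, false) ++ (((M.start, none) :: trace M M.start u).map some).map (·, true)

def acceptMarks : Set (Option (σ × Option V) × Bool) :=
  {x | x.2 = true ∧ ∃ p, x.1 = some p ∧ p.1 ∈ M.accept}

def output (x : Option (σ × Option V) × Bool) : Option V :=
  if x.2 then x.1.bind Prod.snd else none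

theorem filterMap_output_runWord (u : List V) :
    (runWord M u).filterMap output = u := by
  simpa [runWord, output, List.filterMap_map, Function.comp_def] using
    filterMap_snd_trace M M.start u

theorem isChain_map_some_runCore_iff {ps : List (σ × Option V)} :
    (ps.map some).IsChain (fun x y => [y, x] <:+: runCore M) ↔ ps.IsChain (RunStep M) := by
  rw [List.isChain_map]
  exact List.IsChain.iff fun p p' => infix_some_pair_flatMap_iff.trans (mem_edges M)

theorem mem_rHIstar_inter_endMarked_iff {W : List (Option (σ × Option V) × Bool)} :
    W ∈ rHIstar toggle 1 1 (seedWord M) ∩ endMarked (none, true) (acceptMarks M) ↔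
      ∃ u, M.eval u ∈ M.accept ∧ W = runWord M u := by
  rw [seedWord, rHIstar_toggle_eq_walks]
  constructor
  · rintro ⟨⟨ts, hts, rfl⟩, hE⟩
    obtain ⟨init, z, hz⟩ :=
      (some (M.start, none) :: ts).eq_nil_or_concat'.resolve_left (List.cons_ne_nil _ _)
    rw [hz] at hE
    obtain ⟨hinit, -, p, rfl, hp⟩ := mem_endMarked_iff.1 hE
    obtain ⟨_ | ⟨p₀, ps⟩, hps⟩ := exists_eq_map_some_of_none_notMem
      (l := some (M.start, none) :: ts) (by rw [hz]; simpa using hinit)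
    · simp at hps
    simp only [List.map_cons, List.cons.injEq, Option.some.injEq] at hps
    obtain ⟨rfl, rfl⟩ := hps
    rw [← List.map_cons, isChain_map_some_runCore_iff, isChain_runStep_iff] at hts
    obtain ⟨u, rfl⟩ := hts
    refine ⟨u, ?_, by simp [runWord]⟩
    rw [← List.map_cons, List.map_eq_append_iff] at hz
    obtain ⟨init', l, h, -, hl⟩ := hz
    obtain rfl : l = [p] := by simpa using hl
    rwa [fst_eq_evalFrom_of_cons_trace_eq M h] at hp
  · rintro ⟨u, hacc, rfl⟩
    obtain ⟨init, p, hp⟩ :=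
      ((M.start, none) :: trace M M.start u).eq_nil_or_concat'.resolve_left (List.cons_ne_nil _ _)
    refine ⟨⟨(trace M M.start u).map some, ?_, by simp [runWord]⟩, ?_⟩
    · rw [← List.map_cons, isChain_map_some_runCore_iff, isChain_runStep_iff]
      exact ⟨u, rfl⟩
    · rw [runWord, hp, List.map_append, List.map_singleton]
      refine mem_endMarked_iff.2 ⟨by simp, rfl, p, rfl, ?_⟩
      rwa [fst_eq_evalFrom_of_cons_trace_eq M hp]

theorem accepts_eq_image_rHIstar :
    M.accepts = List.filterMap output ''
      (rHIstar toggle 1 1 (seedWord M) ∩ endMarked (none, true) (acceptMarks M)) := by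
  ext u
  constructor
  · exact fun hu => ⟨runWord M u, mem_rHIstar_inter_endMarked_iff M |>.2 ⟨u, hu, rfl⟩,
      filterMap_output_runWord M u⟩
  · rintro ⟨W, hW, rfl⟩
    obtain ⟨u, hu, rfl⟩ := mem_rHIstar_inter_endMarked_iff M |>.1 hW
    rwa [filterMap_output_runWord]

end RunEncoding


variable {V : Type} [Fintype V]

theorem regular_iff_rHIstar_repr (L : Set (List V)) :
    Language.IsRegular (lang L) ↔
      ∃ (V' : Type) (_ : Fintype V') (bar' : V' → V'),
        (∀ a : V', bar' (bar' a) = a) ∧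
        ∃ (hash : V') (V'' : Set V') (w : List V') (h : V' → Option V),
          L = (fun x : List V' => x.filterMap h) ''
            (rHIstar bar' 1 1 w ∩
              {x : List V' | ∃ (x' : List V') (a : V'),
                x = x' ++ [a] ∧ a ∈ V'' ∧ hash ∉ x'}) := by
  constructor
  · rintro ⟨σ, _, M, hM⟩
    exact ⟨_, inferInstance, toggle, toggle_toggle, (none, true), acceptMarks M,
      seedWord M, output,
      hM.symm.trans (accepts_eq_image_rHIstar M)⟩
  · rintro ⟨V', _, bar', -, hash, V'', w, h, rfl⟩
    exact isRegular_image_filterMap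
      ((isRegular_rHIstar bar' w).inf (isRegular_endMarked hash V'')) h

end Hairpin
end
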